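/- arXiv:2306.07893 — 3 statements merged into one kernel-verified Lean document; each statement's English description precedes it below -/
import Mathlib

section
/- Fix a Backward Rewarding Mechanism M[f₁,…,fₙ] and define Φ(σ) = Σ_{k=1}^{n} ∫₀^{σ_{(k)}} f_k(t) dt for σ ∈ [0,1]ⁿ, where σ_{(1)} ≥ ⋯ ≥ σ_{(n)} is the nonincreasing rearrangement of σ. Let Rᵢ(σ) denote creator i's BRM reward, i.e., Rᵢ(σ) = Σ_{k=ρ}^{n} ∫_{σ_{(k+1)}}^{σ_{(k)}} f_k(t) dt where ρ is the rank of σᵢ among σ₁,…,σₙ and σ_{(n+1)} := 0. Then for every creator i, every σ ∈ [0,1]ⁿ, and every σ'ᵢ ∈ [0,1]: Rᵢ(σ'ᵢ, σ₋ᵢ) − Rᵢ(σ) = Φ(σ'ᵢ, σ₋ᵢ) − Φ(σ). -/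
open MeasureTheory

/-- A score vector is "sorted" if it is nonincreasing and takes values in `[0,1]`. -/
def SortedScores (n : ℕ) (σ : Fin n → ℝ) : Prop :=
  (∀ i j : Fin n, i ≤ j → σ j ≤ σ i) ∧ ∀ i, σ i ∈ Set.Icc (0:ℝ) 1

/-- The sorted score vector consisting of `k` ones followed by zeros. -/
def onesVec (n k : ℕ) : Fin n → ℝ := fun i => if (i : ℕ) < k then 1 else 0

/-- The defining hypotheses on the family `f₁, …, fₙ` of a Backward Rewarding
Mechanism: each `f k` is integrable on `[0,1]`, nonnegative on `[0,1]`,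
pointwise nonincreasing in the index `k`, and `f₁ > 0` on `[0,1]`. -/
def BRMHyp {n : ℕ} (f : Fin n → ℝ → ℝ) : Prop :=
  (∀ k, IntervalIntegrable (f k) volume 0 1) ∧
  (∀ k, ∀ t ∈ Set.Icc (0:ℝ) 1, 0 ≤ f k t) ∧
  (∀ k k' : Fin n, k ≤ k' → ∀ t ∈ Set.Icc (0:ℝ) 1, f k' t ≤ f k t) ∧
  (∀ k : Fin n, (k : ℕ) = 0 → ∀ t ∈ Set.Icc (0:ℝ) 1, 0 < f k t)

/-- `σ_{k+1}`, with the convention `σ_{n+1} = 0`. -/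
def nextVal {n : ℕ} (σ : Fin n → ℝ) (k : Fin n) : ℝ :=
  if h : (k : ℕ) + 1 < n then σ ⟨(k : ℕ) + 1, h⟩ else 0

/-- The BRM reward of the creator at (0-indexed) rank `p` of the nonincreasing score
vector `σ`: `∑_{k ≥ p} ∫_{σ_{k+1}}^{σ_k} f_k(t) dt`. -/
noncomputable def brmRankedN {n : ℕ} (f : Fin n → ℝ → ℝ) (σ : Fin n → ℝ) (p : ℕ) : ℝ :=
  ∑ k : Fin n, if p ≤ (k : ℕ) then ∫ t in (nextVal σ k)..(σ k), f k t else 0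

/-- The BRM reward of the creator holding the `i`-th largest score of the
nonincreasing score vector `σ` (0-indexed). -/
noncomputable def brmRanked {n : ℕ} (f : Fin n → ℝ → ℝ) (σ : Fin n → ℝ) (i : Fin n) : ℝ :=
  brmRankedN f σ (i : ℕ)

/-- The nonincreasing rearrangement of an arbitrary score vector:
`sortDesc σ k` is the `k`-th largest entry of `σ` (0-indexed). -/
noncomputable def sortDesc {n : ℕ} (σ : Fin n → ℝ) : Fin n → ℝ :=
  fun k => σ (Tuple.sort σ k.rev)

/-- The (0-indexed) rank of creator `i` in the score vector `σ`, ties broken by index. -/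
noncomputable def rankCount {n : ℕ} (σ : Fin n → ℝ) (i : Fin n) : ℕ :=
  (Finset.univ.filter fun j => σ i < σ j ∨ (σ i = σ j ∧ j < i)).card

/-- Creator `i`'s BRM reward on an arbitrary score vector `σ ∈ [0,1]ⁿ`. -/
noncomputable def brmRewardAt {n : ℕ} (f : Fin n → ℝ → ℝ) (σ : Fin n → ℝ) (i : Fin n) : ℝ :=
  brmRankedN f (sortDesc σ) (rankCount σ i)

/-- The BRM potential `Φ(σ) = ∑_k ∫₀^{σ_(k)} f_k(t) dt`. -/
noncomputable def brmPotential {n : ℕ} (f : Fin n → ℝ → ℝ) (σ : Fin n → ℝ) : ℝ :=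
  ∑ k : Fin n, ∫ t in (0:ℝ)..(sortDesc σ k), f k t





noncomputable def cS {n : ℕ} (σ : Fin n → ℝ) (v : ℝ) : ℕ :=
  (Finset.univ.filter fun j => v < σ j).card
noncomputable def cL {n : ℕ} (σ : Fin n → ℝ) (v : ℝ) : ℕ :=
  (Finset.univ.filter fun j => v ≤ σ j).card

lemma card_filter_comp {n : ℕ} (p : Fin n → Prop) [DecidablePred p] (e : Equiv.Perm (Fin n)) :
    ((Finset.univ.filter fun k => p (e k)).card : ℕ) = (Finset.univ.filter p).card := by
  apply Finset.card_bij (fun a _ => e a)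
  · intro a ha; simp_all
  · intro a _ b _ h; exact e.injective h
  · intro b hb; exact ⟨e.symm b, by simp_all, by simp⟩

lemma cS_comp {n : ℕ} (σ : Fin n → ℝ) (e : Equiv.Perm (Fin n)) (v : ℝ) :
    cS (σ ∘ e) v = cS σ v := card_filter_comp (fun j => v < σ j) e

lemma cL_comp {n : ℕ} (σ : Fin n → ℝ) (e : Equiv.Perm (Fin n)) (v : ℝ) :
    cL (σ ∘ e) v = cL σ v := card_filter_comp (fun j => v ≤ σ j) e

lemma cS_self {n : ℕ} (w : Fin n → ℝ) (hw : ∀ i j : Fin n, i ≤ j → w j ≤ w i) (k : Fin n) :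
    cS w (w k) ≤ (k : ℕ) := by
  have hsub : (Finset.univ.filter fun j => w k < w j) ⊆ Finset.Iio k := by
    intro j hj
    simp only [Finset.mem_filter] at hj
    simp only [Finset.mem_Iio]
    by_contra hc
    exact absurd (hw k j (le_of_not_gt hc)) (not_le.2 hj.2)
  calc cS w (w k) ≤ (Finset.Iio k).card := Finset.card_le_card hsub
    _ = (k : ℕ) := Fin.card_Iio k

lemma cL_self {n : ℕ} (w : Fin n → ℝ) (hw : ∀ i j : Fin n, i ≤ j → w j ≤ w i) (k : Fin n) :
    (k : ℕ) < cL w (w k) := by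
  have hsub : Finset.Iic k ⊆ (Finset.univ.filter fun j => w k ≤ w j) := by
    intro j hj
    simp only [Finset.mem_Iic] at hj
    simp only [Finset.mem_filter, Finset.mem_univ, true_and]
    exact hw j k hj
  calc (k : ℕ) < (k : ℕ) + 1 := Nat.lt_succ_self _
    _ = (Finset.Iic k).card := (Fin.card_Iic k).symm
    _ ≤ cL w (w k) := Finset.card_le_card hsub

lemma antitone_eq_of_counts {n : ℕ} (w : Fin n → ℝ) (hw : ∀ i j : Fin n, i ≤ j → w j ≤ w i)
    (v : ℝ) (k : Fin n) (h1 : cS w v ≤ (k : ℕ)) (h2 : (k : ℕ) < cL w v) : w k = v := by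
  rcases lt_trichotomy (w k) v with h | h | h
  · exfalso
    have hsub : (Finset.univ.filter fun j => v ≤ w j) ⊆ Finset.Iio k := by
      intro j hj
      simp only [Finset.mem_filter] at hj
      simp only [Finset.mem_Iio]
      by_contra hc
      exact absurd (le_trans hj.2 (hw k j (le_of_not_gt hc))) (not_le.2 h)
    have := Finset.card_le_card hsub
    rw [Fin.card_Iio k] at this
    unfold cL at h2
    omega
  · exact h
  · exfalso
    have hsub : Finset.Iic k ⊆ (Finset.univ.filter fun j => v < w j) := by
      intro j hj
      simp only [Finset.mem_Iic] at hj
      simp only [Finset.mem_filter, Finset.mem_univ, true_and]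
      exact lt_of_lt_of_le h (hw j k hj)
    have := Finset.card_le_card hsub
    rw [Fin.card_Iic k] at this
    unfold cS at h1
    omega


lemma sortDesc_eq_comp {n : ℕ} (σ : Fin n → ℝ) :
    sortDesc σ = σ ∘ ⇑(Fin.revPerm.trans (Tuple.sort σ)) := rfl

lemma sortDesc_anti {n : ℕ} (σ : Fin n → ℝ) :
    ∀ i j : Fin n, i ≤ j → sortDesc σ j ≤ sortDesc σ i := by
  intro i j hij
  exact Tuple.monotone_sort σ (by simpa using hij)

lemma sortDesc_mem {n : ℕ} (σ : Fin n → ℝ) (hσ : ∀ j, σ j ∈ Set.Icc (0:ℝ) 1) (k : Fin n) :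
    sortDesc σ k ∈ Set.Icc (0:ℝ) 1 := hσ _

lemma cS_sortDesc {n : ℕ} (σ : Fin n → ℝ) (v : ℝ) : cS (sortDesc σ) v = cS σ v := by
  rw [sortDesc_eq_comp]; exact cS_comp σ _ v

lemma cL_sortDesc {n : ℕ} (σ : Fin n → ℝ) (v : ℝ) : cL (sortDesc σ) v = cL σ v := by
  rw [sortDesc_eq_comp]; exact cL_comp σ _ v

lemma cS_le_rank {n : ℕ} (σ : Fin n → ℝ) (i : Fin n) : cS σ (σ i) ≤ rankCount σ i := by
  apply Finset.card_le_card
  intro j hj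
  simp only [Finset.mem_filter, Finset.mem_univ, true_and] at hj ⊢
  exact Or.inl hj

lemma rank_lt_cL {n : ℕ} (σ : Fin n → ℝ) (i : Fin n) : rankCount σ i < cL σ (σ i) := by
  apply Finset.card_lt_card
  rw [Finset.ssubset_iff_of_subset]
  · exact ⟨i, by simp, by simp⟩
  · intro j hj
    simp only [Finset.mem_filter, Finset.mem_univ, true_and] at hj ⊢
    rcases hj with h | h
    · exact h.le
    · exact h.1.le

lemma rank_lt {n : ℕ} (σ : Fin n → ℝ) (i : Fin n) : rankCount σ i < n := by
  have h1 := rank_lt_cL σ i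
  have h2 : cL σ (σ i) ≤ n := by
    have := Finset.card_filter_le (Finset.univ : Finset (Fin n)) (fun j => σ i ≤ σ j)
    simpa [cL] using this
  omega

lemma cS_update_le {n : ℕ} (σ : Fin n → ℝ) (i : Fin n) (v : ℝ) (hv : 0 ≤ v) :
    cS (Function.update σ i 0) v ≤ cS σ v := by
  apply Finset.card_le_card
  intro j hj
  simp only [Finset.mem_filter, Finset.mem_univ, true_and] at hj ⊢
  rcases eq_or_ne j i with rfl | hne
  · rw [Function.update_self] at hj; linarith
  · rwa [Function.update_of_ne hne] at hj

lemma cS_update_eq {n : ℕ} (σ : Fin n → ℝ) (i : Fin n) (v : ℝ) (hv : 0 ≤ v) (hvi : v < σ i) :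
    cS σ v = cS (Function.update σ i 0) v + 1 := by
  have hset : (Finset.univ.filter fun j => v < Function.update σ i 0 j)
      = (Finset.univ.filter fun j => v < σ j).erase i := by
    ext j
    simp only [Finset.mem_filter, Finset.mem_univ, true_and, Finset.mem_erase]
    rcases eq_or_ne j i with rfl | hne
    · simp only [Function.update_self]
      constructor
      · intro h; linarith
      · intro h; exact absurd rfl h.1
    · simp [Function.update_of_ne hne, hne]
  have hi : i ∈ (Finset.univ.filter fun j => v < σ j) := by simp [hvi]
  show (Finset.univ.filter fun j => v < σ j).card
      = (Finset.univ.filter fun j => v < Function.update σ i 0 j).card + 1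
  rw [hset, Finset.card_erase_add_one hi]

lemma cL_update_ge {n : ℕ} (σ : Fin n → ℝ) (i : Fin n) (v : ℝ) :
    cL σ v ≤ cL (Function.update σ i 0) v + 1 := by
  have hsub : (Finset.univ.filter fun j => v ≤ σ j)
      ⊆ insert i (Finset.univ.filter fun j => v ≤ Function.update σ i 0 j) := by
    intro j hj
    simp only [Finset.mem_filter, Finset.mem_univ, true_and] at hj
    rcases eq_or_ne j i with rfl | hne
    · exact Finset.mem_insert_self _ _
    · exact Finset.mem_insert_of_mem (by
        simp only [Finset.mem_filter, Finset.mem_univ, true_and]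
        rwa [Function.update_of_ne hne])
  calc cL σ v ≤ _ := Finset.card_le_card hsub
    _ ≤ _ + 1 := Finset.card_insert_le _ _

lemma cL_update_eq {n : ℕ} (σ : Fin n → ℝ) (i : Fin n) (v : ℝ) (hvi : σ i < v) (h0 : 0 ≤ σ i) :
    cL (Function.update σ i 0) v = cL σ v := by
  show (Finset.univ.filter fun j => v ≤ Function.update σ i 0 j).card
      = (Finset.univ.filter fun j => v ≤ σ j).card
  congr 1
  ext j
  simp only [Finset.mem_filter, Finset.mem_univ, true_and]
  rcases eq_or_ne j i with rfl | hne
  · simp only [Function.update_self]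
    constructor <;> intro h <;> linarith
  · rw [Function.update_of_ne hne]

lemma update_mem {n : ℕ} (σ : Fin n → ℝ) (hσ : ∀ j, σ j ∈ Set.Icc (0:ℝ) 1) (i : Fin n)
    (v : ℝ) (hv : v ∈ Set.Icc (0:ℝ) 1) :
    ∀ j, Function.update σ i v j ∈ Set.Icc (0:ℝ) 1 := by
  intro j
  rcases eq_or_ne j i with rfl | hne
  · rw [Function.update_self]; exact hv
  · rw [Function.update_of_ne hne]; exact hσ j

lemma sortDesc_update {n : ℕ} (σ : Fin n → ℝ) (hσ : ∀ j, σ j ∈ Set.Icc (0:ℝ) 1) (i : Fin n)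
    (k : Fin n) :
    sortDesc (Function.update σ i 0) k =
      if (k : ℕ) < rankCount σ i then sortDesc σ k else nextVal (sortDesc σ) k := by
  have hρn : rankCount σ i < n := rank_lt σ i
  have hτa := sortDesc_anti σ
  have hμa := sortDesc_anti (Function.update σ i 0)
  have h0i : (0:ℝ) ≤ σ i := (hσ i).1
  have hτρ : sortDesc σ ⟨rankCount σ i, hρn⟩ = σ i := by
    apply antitone_eq_of_counts _ hτa
    · rw [cS_sortDesc]; exact cS_le_rank σ i
    · rw [cL_sortDesc]; exact rank_lt_cL σ i
  by_cases hk : (k : ℕ) < rankCount σ i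
  · rw [if_pos hk]
    apply antitone_eq_of_counts _ hμa
    · rw [cS_sortDesc]
      calc cS (Function.update σ i 0) (sortDesc σ k)
          ≤ cS σ (sortDesc σ k) := cS_update_le σ i _ (sortDesc_mem σ hσ k).1
        _ = cS (sortDesc σ) (sortDesc σ k) := (cS_sortDesc σ _).symm
        _ ≤ (k : ℕ) := cS_self _ hτa k
    · rw [cL_sortDesc]
      have hki : σ i ≤ sortDesc σ k := by
        rw [← hτρ]; exact hτa k ⟨rankCount σ i, hρn⟩ (by simp [Fin.le_def]; omega)
      rcases lt_or_eq_of_le hki with hlt | heq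
      · rw [cL_update_eq σ i _ hlt h0i]
        have := cL_self _ hτa k
        rwa [cL_sortDesc] at this
      · rw [← heq]
        have h1 : rankCount σ i < cL σ (σ i) := rank_lt_cL σ i
        have h2 := cL_update_ge σ i (σ i)
        omega
  · rw [if_neg hk]
    push_neg at hk
    by_cases hkn : (k : ℕ) + 1 < n
    · have hnv : nextVal (sortDesc σ) k = sortDesc σ ⟨(k:ℕ)+1, hkn⟩ := by
        simp [nextVal, hkn]
      rw [hnv]
      apply antitone_eq_of_counts _ hμa
      · rw [cS_sortDesc]
        have hb : sortDesc σ ⟨(k:ℕ)+1, hkn⟩ ≤ σ i := by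
          rw [← hτρ]; exact hτa ⟨rankCount σ i, hρn⟩ _ (by rw [Fin.le_def]; simp; omega)
        rcases lt_or_eq_of_le hb with hlt | heq
        · have h1 := cS_update_eq σ i _ (sortDesc_mem σ hσ _).1 hlt
          have h2 : cS σ (sortDesc σ ⟨(k:ℕ)+1, hkn⟩) ≤ (k:ℕ) + 1 := by
            have := cS_self _ hτa ⟨(k:ℕ)+1, hkn⟩
            rwa [cS_sortDesc] at this
          omega
        · rw [heq]
          have h1 := cS_update_le σ i (σ i) h0i
          have h2 := cS_le_rank σ i
          omega
      · rw [cL_sortDesc]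
        have h1 := cL_self _ hτa ⟨(k:ℕ)+1, hkn⟩
        rw [cL_sortDesc] at h1
        have h2 := cL_update_ge σ i (sortDesc σ ⟨(k:ℕ)+1, hkn⟩)
        simp only [Fin.val_mk] at h1
        omega
    · have hnv : nextVal (sortDesc σ) k = 0 := by simp [nextVal, hkn]
      rw [hnv]
      have hσ0 : ∀ j, Function.update σ i 0 j ∈ Set.Icc (0:ℝ) 1 :=
        update_mem σ hσ i 0 (by norm_num)
      have hge : 0 ≤ sortDesc (Function.update σ i 0) k :=
        (sortDesc_mem _ hσ0 k).1
      have hle : sortDesc (Function.update σ i 0) k ≤ 0 := by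
        set e := Fin.revPerm.trans (Tuple.sort (Function.update σ i 0)) with he
        have h1 : sortDesc (Function.update σ i 0) (e.symm i) = Function.update σ i 0 i := by
          rw [sortDesc_eq_comp, ← he]
          show Function.update σ i 0 (e (e.symm i)) = _
          rw [Equiv.apply_symm_apply]
        have h3 : e.symm i ≤ k := by
          rw [Fin.le_def]
          have := (e.symm i).isLt
          omega
        calc sortDesc (Function.update σ i 0) k
            ≤ sortDesc (Function.update σ i 0) (e.symm i) := hμa _ _ h3
          _ = 0 := by rw [h1, Function.update_self]
      linarith

lemma intOn {n : ℕ} {f : Fin n → ℝ → ℝ} (hf : BRMHyp f) (k : Fin n) {a : ℝ}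
    (ha : a ∈ Set.Icc (0:ℝ) 1) : IntervalIntegrable (f k) MeasureTheory.volume 0 a := by
  apply (hf.1 k).mono_set
  rw [Set.uIcc_of_le ha.1, Set.uIcc_of_le zero_le_one]
  exact Set.Icc_subset_Icc le_rfl ha.2

lemma nextVal_mem {n : ℕ} (τ : Fin n → ℝ) (hτ : ∀ j, τ j ∈ Set.Icc (0:ℝ) 1) (k : Fin n) :
    nextVal τ k ∈ Set.Icc (0:ℝ) 1 := by
  unfold nextVal; split
  · exact hτ _
  · norm_num

lemma brm_key {n : ℕ} (f : Fin n → ℝ → ℝ) (hf : BRMHyp f) (σ : Fin n → ℝ)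
    (hσ : ∀ j, σ j ∈ Set.Icc (0:ℝ) 1) (i : Fin n) :
    brmRewardAt f σ i = brmPotential f σ - brmPotential f (Function.update σ i 0) := by
  unfold brmRewardAt brmPotential brmRankedN
  rw [← Finset.sum_sub_distrib]
  apply Finset.sum_congr rfl
  intro k _
  rw [sortDesc_update σ hσ i k]
  by_cases hk : (k : ℕ) < rankCount σ i
  · rw [if_pos hk, if_neg (by omega), sub_self]
  · rw [if_neg hk, if_pos (by omega)]
    have hτ := sortDesc_mem σ hσ
    exact (intervalIntegral.integral_interval_sub_left (intOn hf k (hτ k))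
      (intOn hf k (nextVal_mem _ hτ k))).symm


/-- The BRM reward is an exact potential for unilateral score changes:
for every creator `i`, score vector `σ ∈ [0,1]ⁿ` and new own score `v ∈ [0,1]`,
the change of creator `i`'s reward equals the change of `Φ`. -/
theorem stmt9 {n : ℕ} (f : Fin n → ℝ → ℝ) (hf : BRMHyp f)
    (σ : Fin n → ℝ) (hσ : ∀ j, σ j ∈ Set.Icc (0:ℝ) 1)
    (i : Fin n) (v : ℝ) (hv : v ∈ Set.Icc (0:ℝ) 1) :
    brmRewardAt f (Function.update σ i v) i - brmRewardAt f σ i =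
      brmPotential f (Function.update σ i v) - brmPotential f σ := by
  have h1 := brm_key f hf (Function.update σ i v) (update_mem σ hσ i v hv) i
  have h2 := brm_key f hf σ hσ i
  rw [Function.update_idem] at h1
  rw [h1, h2]
  ring
end

section
/- Consider a C³ game with a finite user set under a Backward Rewarding Mechanism M[f₁,…,fₙ], and suppose additionally that every strategy set Sᵢ is finite and nonempty. Then every global maximizer of the potential P(s) = Σ_{x∈X} Σ_{k=1}^{n} ∫₀^{σ_{(k)}(x)} f_k(t) dt − Σᵢ cᵢ(sᵢ) is a pure Nash equilibrium; in particular, the game admits a pure Nash equilibrium. -/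
open MeasureTheory

/-- Creator `i`'s utility in a C³ game with finite user set `U` under the mechanism with
per-user rewards `brmRewardAt f`: total reward over all users minus the production cost. -/
noncomputable def c3Utility {n : ℕ} {U : Type*} [Fintype U] (f : Fin n → ℝ → ℝ)
    (S : Fin n → Type*) (score : ∀ i, S i → U → ℝ) (c : ∀ i, S i → ℝ)
    (s : ∀ i, S i) (i : Fin n) : ℝ :=
  (∑ x : U, brmRewardAt f (fun j => score j (s j) x) i) - c i (s i)

/-- The potential `P(s) = ∑_x ∑_k ∫₀^{σ_(k)(x)} f_k(t) dt − ∑_i c_i(s_i)`. -/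
noncomputable def c3Potential {n : ℕ} {U : Type*} [Fintype U] (f : Fin n → ℝ → ℝ)
    (S : Fin n → Type*) (score : ∀ i, S i → U → ℝ) (c : ∀ i, S i → ℝ)
    (s : ∀ i, S i) : ℝ :=
  (∑ x : U, brmPotential f (fun j => score j (s j) x)) - ∑ i, c i (s i)

/-!
At a fixed user and threshold `t`, let `N(t)` be the number of creators with score at least `t`
and `M(t)` the number of creators other than `i` with score at least `t`. The potential integrand
at level `t` is `∑_{k < N(t)} f_k(t)`, while the BRM pays creator `i` exactly the top layer
`f_{M(t)}(t)` of it whenever `σ_i ≥ t`. Hence potential minus reward is `∑_k ∫ [k < M(t)] f_k(t) dt`,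
which does not depend on creator `i`'s own score: the game is an exact potential game, and a
maximizer of the potential, which exists since the strategy sets are finite, is a pure Nash
equilibrium.
-/

open Finset

section Game

variable {ι : Type*} [DecidableEq ι] {S : ι → Type*}

def IsPureNashEquilibrium (u : (∀ i, S i) → ι → ℝ) (s : ∀ i, S i) : Prop :=
  ∀ (i : ι) (a : S i), u (Function.update s i a) i ≤ u s i

def IsExactPotential (u : (∀ i, S i) → ι → ℝ) (P : (∀ i, S i) → ℝ) : Prop :=
  ∀ (s : ∀ i, S i) (i : ι) (a : S i),
    u (Function.update s i a) i - u s i = P (Function.update s i a) - P s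

namespace IsExactPotential

variable {u : (∀ i, S i) → ι → ℝ} {P : (∀ i, S i) → ℝ}

theorem isPureNashEquilibrium_of_forall_le (hP : IsExactPotential u P) {s : ∀ i, S i}
    (hs : ∀ s', P s' ≤ P s) : IsPureNashEquilibrium u s := fun i a => by
  linarith [hP s i a, hs (Function.update s i a)]

theorem exists_isPureNashEquilibrium [Finite (∀ i, S i)] [Nonempty (∀ i, S i)]
    (hP : IsExactPotential u P) : ∃ s, IsPureNashEquilibrium u s :=
  let ⟨s, hs⟩ := Finite.exists_max P
  ⟨s, hP.isPureNashEquilibrium_of_forall_le hs⟩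

end IsExactPotential

theorem sum_apply_update_sub [Fintype ι] (c : ∀ i, S i → ℝ) (s : ∀ i, S i) (i : ι) (a : S i) :
    ∑ j, c j (Function.update s i a j) - ∑ j, c j (s j) = c i a - c i (s i) := by
  simp_rw [Function.apply_update c, sum_update_of_mem (mem_univ i)]
  rw [← add_sum_erase _ _ (mem_univ i), sdiff_singleton_eq_erase]
  ring

end Game

section Counting

variable {n : ℕ}

noncomputable def countAtLeast (σ : Fin n → ℝ) (t : ℝ) : ℕ :=
  #{j | t ≤ σ j}

noncomputable def countAtLeastExcept (σ : Fin n → ℝ) (i : Fin n) (t : ℝ) : ℕ :=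
  #{j | j ≠ i ∧ t ≤ σ j}

theorem sortDesc_antitone (σ : Fin n → ℝ) : Antitone (sortDesc σ) :=
  fun _ _ hkl => Tuple.monotone_sort σ (Fin.rev_le_rev.mpr hkl)

theorem countAtLeast_sortDesc (σ : Fin n → ℝ) (t : ℝ) :
    countAtLeast (sortDesc σ) t = countAtLeast σ t :=
  card_equiv (Fin.revPerm.trans (Tuple.sort σ)) fun _ => by
    simp only [mem_filter, mem_univ, true_and]
    rfl

theorem le_sortDesc_iff (σ : Fin n → ℝ) (t : ℝ) (k : Fin n) :
    t ≤ sortDesc σ k ↔ (k : ℕ) < countAtLeast σ t := by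
  rw [← countAtLeast_sortDesc, countAtLeast]
  constructor
  · intro h
    have hsub : Iic k ⊆ ({j | t ≤ sortDesc σ j} : Finset (Fin n)) := fun j hj => by
      simpa using h.trans (sortDesc_antitone σ (mem_Iic.mp hj))
    simpa using card_le_card hsub
  · intro h
    by_contra! hk
    have hsub : ({j | t ≤ sortDesc σ j} : Finset (Fin n)) ⊆ Iio k := fun j hj => by
      simp only [mem_filter, mem_univ, true_and] at hj
      exact mem_Iio.mpr (lt_of_not_ge fun hkj => (hj.trans (sortDesc_antitone σ hkj)).not_gt hk)
    have := card_le_card hsub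
    simp only [Fin.card_Iio] at this
    omega

theorem le_nextVal_sortDesc_iff (σ : Fin n → ℝ) {t : ℝ} (ht : 0 < t) (k : Fin n) :
    t ≤ nextVal (sortDesc σ) k ↔ (k : ℕ) + 1 < countAtLeast σ t := by
  unfold nextVal
  split_ifs with h
  · exact le_sortDesc_iff σ t ⟨k + 1, h⟩
  · have : countAtLeast σ t ≤ n := (card_filter_le _ _).trans_eq (card_fin n)
    exact ⟨fun h' => by linarith, fun h' => by omega⟩

theorem rankCount_lt_countAtLeast_iff (σ : Fin n → ℝ) (i : Fin n) (t : ℝ) :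
    rankCount σ i < countAtLeast σ t ↔ t ≤ σ i := by
  unfold rankCount countAtLeast
  constructor
  · intro h
    by_contra! hti
    have hsub : ({j | t ≤ σ j} : Finset (Fin n)) ⊆
        ({j | σ i < σ j ∨ (σ i = σ j ∧ j < i)} : Finset (Fin n)) := fun j hj => by
      simp only [mem_filter, mem_univ, true_and] at hj ⊢
      exact Or.inl (hti.trans_le hj)
    exact (card_le_card hsub).not_gt h
  · intro hti
    have hsub : insert i ({j | σ i < σ j ∨ (σ i = σ j ∧ j < i)} : Finset (Fin n)) ⊆
        ({j | t ≤ σ j} : Finset (Fin n)) := fun j hj => by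
      simp only [mem_insert, mem_filter, mem_univ, true_and] at hj ⊢
      rcases hj with rfl | hj | ⟨hj, -⟩
      · exact hti
      · exact hti.trans hj.le
      · exact hj ▸ hti
    have := card_le_card hsub
    rw [card_insert_of_notMem (by simp)] at this
    omega

theorem countAtLeast_eq_countAtLeastExcept_add (σ : Fin n → ℝ) (i : Fin n) (t : ℝ) :
    countAtLeast σ t = countAtLeastExcept σ i t + if t ≤ σ i then 1 else 0 := by
  unfold countAtLeast countAtLeastExcept
  split_ifs with hti
  · rw [← card_insert_of_notMem (a := i) (by simp)]
    congr 1
    ext j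
    by_cases hji : j = i <;> simp [hji, hti]
  · rw [add_zero]
    congr 1
    ext j
    by_cases hji : j = i <;> simp [hji, hti]

theorem countAtLeastExcept_congr {σ σ' : Fin n → ℝ} {i : Fin n} (h : ∀ j ≠ i, σ j = σ' j)
    (t : ℝ) : countAtLeastExcept σ i t = countAtLeastExcept σ' i t := by
  unfold countAtLeastExcept
  congr 1
  ext j
  simp only [mem_filter, mem_univ, true_and, and_congr_right_iff]
  intro hji
  rw [h j hji]

theorem le_sortDesc_iff_lt_countAtLeastExcept (σ : Fin n → ℝ) {i k : Fin n} (t : ℝ)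
    (hk : (k : ℕ) < rankCount σ i) :
    t ≤ sortDesc σ k ↔ (k : ℕ) < countAtLeastExcept σ i t := by
  have hN := countAtLeast_eq_countAtLeastExcept_add σ i t
  have hrank := rankCount_lt_countAtLeast_iff σ i t
  rw [le_sortDesc_iff]
  split_ifs at hN <;> constructor <;> intro <;> simp_all <;> omega

theorem le_nextVal_sortDesc_iff_lt_countAtLeastExcept (σ : Fin n → ℝ) {i k : Fin n} {t : ℝ}
    (ht : 0 < t) (hk : rankCount σ i ≤ k) :
    t ≤ nextVal (sortDesc σ) k ↔ (k : ℕ) < countAtLeastExcept σ i t := by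
  have hN := countAtLeast_eq_countAtLeastExcept_add σ i t
  have hrank := rankCount_lt_countAtLeast_iff σ i t
  rw [le_nextVal_sortDesc_iff σ ht]
  split_ifs at hN <;> constructor <;> intro <;> simp_all <;> omega

end Counting

section Mechanism

variable {n : ℕ} {f : Fin n → ℝ → ℝ}

theorem brmPotential_sub_brmRewardAt (hf : ∀ k, IntervalIntegrable (f k) volume 0 1)
    {σ : Fin n → ℝ} (hσ : ∀ j, σ j ∈ Set.Icc (0 : ℝ) 1) (i : Fin n) :
    brmPotential f σ - brmRewardAt f σ i =
      ∑ k : Fin n, ∫ t in (0 : ℝ)..1, if (k : ℕ) < countAtLeastExcept σ i t then f k t else 0 := by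
  have hd : ∀ k, sortDesc σ k ∈ Set.Icc (0 : ℝ) 1 := fun k => hσ _
  have he : ∀ k, nextVal (sortDesc σ) k ∈ Set.Icc (0 : ℝ) 1 := fun k => by
    unfold nextVal
    split_ifs
    exacts [hd _, ⟨le_rfl, zero_le_one⟩]
  have hint : ∀ k {s : ℝ}, s ∈ Set.Icc (0 : ℝ) 1 → IntervalIntegrable (f k) volume 0 s :=
    fun k s hs => (hf k).mono_set (Set.uIcc_subset_uIcc_left (by simpa using hs))
  have htrunc : ∀ k {s : ℝ}, s ∈ Set.Icc (0 : ℝ) 1 →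
      ∫ t in (0 : ℝ)..s, f k t = ∫ t in (0 : ℝ)..1, if t ≤ s then f k t else 0 := fun k s hs => by
    rw [← intervalIntegral.integral_indicator hs]
    rfl
  unfold brmPotential brmRewardAt brmRankedN
  rw [← sum_sub_distrib]
  refine sum_congr rfl fun k _ => ?_
  split_ifs with hk
  · rw [← intervalIntegral.integral_interval_sub_left (hint k (hd k)) (hint k (he k)),
      sub_sub_cancel, htrunc k (he k)]
    refine intervalIntegral.integral_congr_ae (ae_of_all _ fun t ht => ?_)
    rw [Set.uIoc_of_le zero_le_one] at ht
    rw [if_congr (le_nextVal_sortDesc_iff_lt_countAtLeastExcept σ ht.1 hk) rfl rfl]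
  · rw [sub_zero, htrunc k (hd k)]
    refine intervalIntegral.integral_congr fun t _ => ?_
    rw [if_congr (le_sortDesc_iff_lt_countAtLeastExcept σ t (not_le.mp hk)) rfl rfl]

theorem brmRewardAt_sub_eq_brmPotential_sub (hf : ∀ k, IntervalIntegrable (f k) volume 0 1)
    {σ σ' : Fin n → ℝ} (hσ : ∀ j, σ j ∈ Set.Icc (0 : ℝ) 1) (hσ' : ∀ j, σ' j ∈ Set.Icc (0 : ℝ) 1)
    {i : Fin n} (h : ∀ j ≠ i, σ j = σ' j) :
    brmRewardAt f σ' i - brmRewardAt f σ i = brmPotential f σ' - brmPotential f σ := by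
  have h₁ := brmPotential_sub_brmRewardAt hf hσ i
  have h₂ := brmPotential_sub_brmRewardAt hf hσ' i
  simp_rw [countAtLeastExcept_congr h] at h₁
  linarith

theorem isExactPotential_c3Potential {U : Type*} [Fintype U]
    (hf : ∀ k, IntervalIntegrable (f k) volume 0 1) (S : Fin n → Type*)
    (score : ∀ i, S i → U → ℝ) (c : ∀ i, S i → ℝ)
    (hscore : ∀ i a x, score i a x ∈ Set.Icc (0 : ℝ) 1) :
    IsExactPotential (c3Utility f S score c) (c3Potential f S score c) := by
  intro s i a
  have hreward : ∑ x, brmRewardAt f (fun j => score j (Function.update s i a j) x) i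
        - ∑ x, brmRewardAt f (fun j => score j (s j) x) i
      = ∑ x, brmPotential f (fun j => score j (Function.update s i a j) x)
        - ∑ x, brmPotential f (fun j => score j (s j) x) := by
    rw [← sum_sub_distrib, ← sum_sub_distrib]
    refine sum_congr rfl fun x _ => brmRewardAt_sub_eq_brmPotential_sub hf
      (fun j => hscore _ _ _) (fun j => hscore _ _ _) fun j hj => ?_
    rw [Function.update_of_ne hj]
  have hcost := sum_apply_update_sub c s i a
  simp only [c3Utility, c3Potential, Function.update_self]
  linarith

end Mechanism

/-- In a C³ game with finite user set under a BRM, if every strategy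
set is finite and nonempty then every global maximizer of the potential is a pure Nash
equilibrium; in particular a pure Nash equilibrium exists. -/
theorem stmt11 {n : ℕ} {U : Type*} [Fintype U]
    (S : Fin n → Type*) [∀ i, Fintype (S i)] [∀ i, Nonempty (S i)]
    (score : ∀ i, S i → U → ℝ) (c : ∀ i, S i → ℝ)
    (hscore : ∀ i a x, score i a x ∈ Set.Icc (0:ℝ) 1)
    (f : Fin n → ℝ → ℝ) (hf : BRMHyp f) :
    (∀ s : ∀ i, S i,
        (∀ s' : ∀ i, S i, c3Potential f S score c s' ≤ c3Potential f S score c s) →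
        ∀ (i : Fin n) (s'i : S i),
          c3Utility f S score c (Function.update s i s'i) i ≤ c3Utility f S score c s i) ∧
    ∃ s : ∀ i, S i, ∀ (i : Fin n) (s'i : S i),
        c3Utility f S score c (Function.update s i s'i) i ≤ c3Utility f S score c s i := by
  have hP := isExactPotential_c3Potential hf.1 S score c hscore
  exact ⟨fun _ hs => hP.isPureNashEquilibrium_of_forall_le hs, hP.exists_isPureNashEquilibrium⟩
end

section
/- Consider the TvN game with n ≥ 2 creators and attention weights r₁ > r₂ ≥ ⋯ ≥ r_K ≥ 0 = r_{K+1} = ⋯ = rₙ (so in particular r₁ > 0), played under the BRCM mechanism M[r₁,…,rₙ] with constant functions f_k ≡ r_k. Then every pure Nash equilibrium s* of this game attains the optimal social welfare: W(s*) = max_{s} W(s). -/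
open MeasureTheory

/-- In the TvN game (strategy `s i : Fin n` = index of the basis vector chosen by
creator `i`), the number of creators playing `e_j`. -/
def cnt {n : ℕ} (s : Fin n → Fin n) (j : Fin n) : ℕ :=
  (Finset.univ.filter fun i => s i = j).card

/-- Social welfare of the TvN game with attention weights `r`: at a user of type `e_j`,
the `k`-th largest matching score is `1` exactly when `k < cnt s j`; the user of type
`e₁` (index 0) has multiplicity `n+1`, every other type has multiplicity 1. -/
def tvnWelfare {n : ℕ} (r : Fin n → ℝ) (s : Fin n → Fin n) : ℝ :=
  ∑ j : Fin n, (if (j : ℕ) = 0 then (n + 1 : ℝ) else 1) *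
    ∑ k : Fin n, (if (k : ℕ) < cnt s j then r k else 0)

/-- The score vector at a user of type `e_j` under profile `s`. -/
noncomputable def tvnScore {n : ℕ} (s : Fin n → Fin n) (j : Fin n) : Fin n → ℝ :=
  fun i => if s i = j then 1 else 0

/-- Creator `i`'s utility in the TvN game under the BRCM mechanism `M[r₁,…,rₙ]`
(constant functions `f_k ≡ r_k`). -/
noncomputable def tvnBRMUtility {n : ℕ} (r : Fin n → ℝ) (s : Fin n → Fin n) (i : Fin n) : ℝ :=
  ∑ j : Fin n, (if (j : ℕ) = 0 then (n + 1 : ℝ) else 1) *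
    brmRewardAt (fun k (_ : ℝ) => r k) (tvnScore s j) i

section AuxTvN
variable {n : ℕ}

lemma cnt_le_n (s : Fin n → Fin n) (j : Fin n) : cnt s j ≤ n := by
  classical
  calc cnt s j ≤ Finset.univ.card := Finset.card_filter_le _ _
  _ = n := by simp

lemma sum_cnt (s : Fin n → Fin n) : ∑ j, cnt s j = n := by
  classical
  unfold cnt
  rw [← Finset.card_eq_sum_card_fiberwise (fun i _ => Finset.mem_univ (s i))]
  simp

lemma cnt_pos (s : Fin n → Fin n) (i : Fin n) : 0 < cnt s (s i) :=
  Finset.card_pos.mpr ⟨i, Finset.mem_filter.mpr ⟨Finset.mem_univ i, rfl⟩⟩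

lemma cnt_update (s : Fin n → Fin n) (i j' : Fin n) (h : s i ≠ j') :
    cnt (Function.update s i j') j' = cnt s j' + 1 := by
  classical
  unfold cnt
  have he : (Finset.univ.filter fun i' => Function.update s i j' i' = j')
      = insert i (Finset.univ.filter fun i' => s i' = j') := by
    ext i'
    by_cases hi : i' = i <;> simp [Function.update_apply, hi]
  rw [he, Finset.card_insert_of_notMem (by simp [h])]

lemma tvnScore_eq_one_iff (s : Fin n → Fin n) (j i : Fin n) :
    tvnScore s j i = 1 ↔ s i = j := by
  unfold tvnScore; split <;> simp_all

lemma tvnScore_mem (s : Fin n → Fin n) (j i : Fin n) :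
    tvnScore s j i = 0 ∨ tvnScore s j i = 1 := by
  unfold tvnScore; split <;> simp

lemma tvnScore_le_one (s : Fin n → Fin n) (j i : Fin n) : tvnScore s j i ≤ 1 := by
  unfold tvnScore; split <;> norm_num

lemma sortDesc_tvnScore (s : Fin n → Fin n) (j : Fin n) :
    sortDesc (tvnScore s j) = onesVec n (cnt s j) := by
  classical
  set σ := tvnScore s j with hσ
  set c := cnt s j with hc
  have hmn : Monotone (σ ∘ Tuple.sort σ) := Tuple.monotone_sort σ
  have hval : ∀ k : Fin n, σ (Tuple.sort σ k) = 0 ∨ σ (Tuple.sort σ k) = 1 :=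
    fun k => tvnScore_mem s j _
  have hcard : (Finset.univ.filter fun k => σ (Tuple.sort σ k) = 1).card = c := by
    rw [Finset.card_equiv (Tuple.sort σ)
      (t := Finset.univ.filter fun i => σ i = 1) (fun k => by simp)]
    rw [hc]; unfold cnt
    exact congrArg Finset.card (Finset.filter_congr (fun i _ => by
      simpa using tvnScore_eq_one_iff s j i))
  have hup : ∀ k k' : Fin n, k ≤ k' → σ (Tuple.sort σ k) = 1 → σ (Tuple.sort σ k') = 1 := by
    intro k k' hle h1
    have := hmn hle
    rcases hval k' with h0 | h1'
    · simp only [Function.comp] at this; rw [h1, h0] at this; linarith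
    · exact h1'
  have hiff : ∀ k : Fin n, σ (Tuple.sort σ k) = 1 ↔ n - c ≤ (k : ℕ) := by
    intro k
    constructor
    · intro h1
      have hsub : Finset.Ici k ⊆ Finset.univ.filter fun k' => σ (Tuple.sort σ k') = 1 := by
        intro k' hk'
        exact Finset.mem_filter.mpr ⟨Finset.mem_univ _, hup k k' (Finset.mem_Ici.mp hk') h1⟩
      have := Finset.card_le_card hsub
      rw [Fin.card_Ici, hcard] at this
      have := k.isLt; omega
    · intro hge
      by_contra h1
      have h0 : σ (Tuple.sort σ k) = 0 := (hval k).resolve_right h1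
      have hsub : (Finset.univ.filter fun k' => σ (Tuple.sort σ k') = 1) ⊆ Finset.Ioi k := by
        intro k' hk'
        rw [Finset.mem_filter] at hk'
        rw [Finset.mem_Ioi]
        by_contra hle
        push_neg at hle
        have := hup k' k hle hk'.2
        rw [h0] at this; norm_num at this
      have := Finset.card_le_card hsub
      rw [Fin.card_Ioi, hcard] at this
      have := k.isLt; omega
  funext k
  have hrev : ((Fin.rev k : Fin n) : ℕ) = n - (↑k + 1) := Fin.val_rev k
  show σ (Tuple.sort σ k.rev) = onesVec n c k
  unfold onesVec
  have hcn : c ≤ n := cnt_le_n s j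
  have hk := k.isLt
  by_cases hlt : (k : ℕ) < c
  · rw [if_pos hlt]
    exact (hiff k.rev).mpr (by omega)
  · rw [if_neg hlt]
    refine (hval k.rev).resolve_right ?_
    intro h1
    have := (hiff k.rev).mp h1
    omega

lemma onesVec_diff (c : ℕ) (hc : c ≤ n) (k : Fin n) :
    onesVec n c k - nextVal (onesVec n c) k = if (k : ℕ) + 1 = c then 1 else 0 := by
  have hk := k.isLt
  unfold nextVal onesVec
  by_cases h : (k : ℕ) + 1 < n
  · rw [dif_pos h]
    simp only
    by_cases h3 : (k : ℕ) + 1 = c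
    · rw [if_pos h3, if_pos (by omega), if_neg (by omega)]; norm_num
    · rw [if_neg h3]
      by_cases h1 : (k : ℕ) < c
      · rw [if_pos h1, if_pos (by omega)]; norm_num
      · rw [if_neg h1, if_neg (by omega)]; norm_num
  · rw [dif_neg h]
    by_cases h3 : (k : ℕ) + 1 = c
    · rw [if_pos h3, if_pos (by omega)]; norm_num
    · rw [if_neg h3, if_neg (by omega)]; norm_num

lemma brmRankedN_onesVec (r : Fin n → ℝ) (c p : ℕ) (hc : c ≤ n) :
    brmRankedN (fun k (_ : ℝ) => r k) (onesVec n c) p =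
      if h : p < c then r ⟨c - 1, by omega⟩ else 0 := by
  unfold brmRankedN
  have hterm : ∀ k : Fin n,
      (if p ≤ (k : ℕ) then ∫ _t in (nextVal (onesVec n c) k)..(onesVec n c k), r k else 0)
      = if (k : ℕ) + 1 = c ∧ p ≤ (k : ℕ) then r k else 0 := by
    intro k
    by_cases hp : p ≤ (k : ℕ)
    · rw [if_pos hp, intervalIntegral.integral_const, smul_eq_mul, onesVec_diff c hc k]
      by_cases h3 : (k : ℕ) + 1 = c
      · rw [if_pos h3, if_pos ⟨h3, hp⟩, one_mul]
      · rw [if_neg h3, if_neg (by tauto), zero_mul]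
    · rw [if_neg hp, if_neg (by tauto)]
  rw [Finset.sum_congr rfl (fun k _ => hterm k)]
  by_cases hpc : p < c
  · rw [dif_pos hpc]
    rw [Finset.sum_eq_single (⟨c - 1, by omega⟩ : Fin n)]
    · rw [if_pos ⟨by simp; omega, by simp; omega⟩]
    · intro k _ hk
      rw [if_neg]
      rintro ⟨h1, _⟩
      exact hk (by ext; simp; omega)
    · intro h; exact absurd (Finset.mem_univ _) h
  · rw [dif_neg hpc, Finset.sum_eq_zero]
    intro k _
    rw [if_neg]
    rintro ⟨h1, h2⟩
    omega

lemma rank_lt_s13 (s : Fin n → Fin n) (j i : Fin n) (h : s i = j) :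
    rankCount (tvnScore s j) i < cnt s j := by
  classical
  have hσi : tvnScore s j i = 1 := by simp [tvnScore, h]
  have hmem : i ∈ Finset.univ.filter fun i' => s i' = j :=
    Finset.mem_filter.mpr ⟨Finset.mem_univ i, h⟩
  have hsub : (Finset.univ.filter fun j' =>
        tvnScore s j i < tvnScore s j j' ∨ (tvnScore s j i = tvnScore s j j' ∧ j' < i))
      ⊆ (Finset.univ.filter fun i' => s i' = j).erase i := by
    intro j' hj'
    simp only [Finset.mem_filter, Finset.mem_univ, true_and] at hj'
    rcases hj' with hlt | ⟨heq, hlt⟩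
    · exfalso
      have := tvnScore_le_one s j j'
      rw [hσi] at hlt; linarith
    · refine Finset.mem_erase.mpr ⟨ne_of_lt hlt,
        Finset.mem_filter.mpr ⟨Finset.mem_univ _, ?_⟩⟩
      have h1 : tvnScore s j j' = 1 := heq ▸ hσi
      simpa [tvnScore] using h1
  have hcard := Finset.card_le_card hsub
  have hpos : 0 < (Finset.univ.filter fun i' => s i' = j).card :=
    Finset.card_pos.mpr ⟨i, hmem⟩
  rw [Finset.card_erase_of_mem hmem] at hcard
  unfold rankCount cnt
  omega

lemma rank_ge (s : Fin n → Fin n) (j i : Fin n) (h : s i ≠ j) :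
    cnt s j ≤ rankCount (tvnScore s j) i := by
  classical
  have hσi : tvnScore s j i = 0 := by simp [tvnScore, h]
  apply Finset.card_le_card
  intro j' hj'
  simp only [Finset.mem_filter, Finset.mem_univ, true_and] at hj' ⊢
  left
  rw [hσi]
  simp [tvnScore, hj']

/-- The user-type multiplicity. -/
noncomputable def mF (n : ℕ) (j : Fin n) : ℝ := if (j : ℕ) = 0 then (n + 1 : ℝ) else 1

lemma mF_nonneg (j : Fin n) : 0 ≤ mF n j := by
  unfold mF; split <;> positivity

/-- Partial sums of the attention weights. -/
noncomputable def Rr {n : ℕ} (r : Fin n → ℝ) (t : ℕ) : ℝ :=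
  ∑ k : Fin n, if (k : ℕ) < t then r k else 0

lemma Rr_succ (r : Fin n → ℝ) (t : ℕ) (ht : t < n) :
    Rr r (t + 1) = Rr r t + r ⟨t, ht⟩ := by
  unfold Rr
  have hpt : ∀ k : Fin n, (if (k : ℕ) < t + 1 then r k else 0)
      = (if (k : ℕ) < t then r k else 0) + (if k = ⟨t, ht⟩ then r k else 0) := by
    intro k
    by_cases h1 : (k : ℕ) < t
    · rw [if_pos (by omega), if_pos h1, if_neg (by intro he; rw [he] at h1; simp at h1),
        add_zero]
    · by_cases h2 : (k : ℕ) = t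
      · rw [if_pos (by omega), if_neg h1, if_pos (Fin.ext h2), zero_add]
      · rw [if_neg (by omega), if_neg h1,
          if_neg (by intro he; rw [he] at h2; simp at h2), add_zero]
  rw [Finset.sum_congr rfl (fun k _ => hpt k), Finset.sum_add_distrib,
    Finset.sum_ite_eq' Finset.univ (⟨t, ht⟩ : Fin n) r, if_pos (Finset.mem_univ _)]

lemma utility_formula (r : Fin n → ℝ) (s : Fin n → Fin n) (i : Fin n)
    (h : cnt s (s i) - 1 < n) :
    tvnBRMUtility r s i = mF n (s i) * r ⟨cnt s (s i) - 1, h⟩ := by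
  unfold tvnBRMUtility
  rw [Finset.sum_eq_single (s i)]
  · unfold brmRewardAt
    rw [sortDesc_tvnScore, brmRankedN_onesVec r _ _ (cnt_le_n s (s i)),
      dif_pos (rank_lt_s13 s (s i) i rfl)]
    rfl
  · intro j _ hj
    unfold brmRewardAt
    rw [sortDesc_tvnScore, brmRankedN_onesVec r _ _ (cnt_le_n s j),
      dif_neg (not_lt.mpr (rank_ge s j i (fun he => hj he.symm))), mul_zero]
  · intro h'; exact absurd (Finset.mem_univ _) h'

end AuxTvN

section MainTvN
variable {n : ℕ}

lemma main_arith (r : Fin n → ℝ) (m : Fin n → ℝ)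
    (hm : ∀ j, 0 ≤ m j)
    (hmono : ∀ k k' : Fin n, k ≤ k' → r k' ≤ r k)
    (c : Fin n → ℕ) (hc : ∑ j, c j = n)
    (key : ∀ (j₀ j' : Fin n), 0 < c j₀ → j' ≠ j₀ → ∀ (h1 : c j' < n) (h2 : c j₀ - 1 < n),
        m j' * r ⟨c j', h1⟩ ≤ m j₀ * r ⟨c j₀ - 1, h2⟩) :
    ∀ d (c' : Fin n → ℕ), ∑ j, c' j = n → (∑ j, ((c' j - c j) + (c j - c' j))) ≤ d →
      (∑ j, m j * Rr r (c' j)) ≤ ∑ j, m j * Rr r (c j) := by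
  have hbc : ∀ j, c j ≤ n := by
    intro j
    calc c j ≤ ∑ j, c j := Finset.single_le_sum (fun _ _ => Nat.zero_le _) (Finset.mem_univ j)
    _ = n := hc
  intro d
  induction d with
  | zero =>
    intro c' h1 h2
    have hall : ∀ j : Fin n, c' j = c j := by
      intro j
      have h3 : ((c' j - c j) + (c j - c' j)) ≤ ∑ j, ((c' j - c j) + (c j - c' j)) :=
        Finset.single_le_sum (f := fun i => (c' i - c i) + (c i - c' i))
          (fun _ _ => Nat.zero_le _) (Finset.mem_univ j)
      omega
    exact le_of_eq (Finset.sum_congr rfl fun j _ => by rw [hall j])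
  | succ d ih =>
    intro c' h1 h2
    by_cases heq : ∀ j, c' j = c j
    · exact le_of_eq (Finset.sum_congr rfl fun j _ => by rw [heq j])
    · push_neg at heq
      obtain ⟨j0, hj0⟩ := heq
      have hbc' : ∀ j, c' j ≤ n := by
        intro j
        calc c' j ≤ ∑ j, c' j :=
          Finset.single_le_sum (fun _ _ => Nat.zero_le _) (Finset.mem_univ j)
        _ = n := h1
      have hja : ∃ ja, c ja < c' ja := by
        by_contra hco
        push_neg at hco
        have hlt : ∑ j, c' j < ∑ j, c j :=
          Finset.sum_lt_sum (fun j _ => hco j)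
            ⟨j0, Finset.mem_univ _, by have := hco j0; omega⟩
        omega
      have hjb : ∃ jb, c' jb < c jb := by
        by_contra hco
        push_neg at hco
        have hlt : ∑ j, c j < ∑ j, c' j :=
          Finset.sum_lt_sum (fun j _ => hco j)
            ⟨j0, Finset.mem_univ _, by have := hco j0; omega⟩
        omega
      obtain ⟨ja, hlta⟩ := hja
      obtain ⟨jb, hltb⟩ := hjb
      have hab : ja ≠ jb := by intro hee; rw [hee] at hlta; omega
      set c'' : Fin n → ℕ :=
        fun j => if j = ja then c' ja - 1 else if j = jb then c' jb + 1 else c' j with hcdef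
      have hc''a : c'' ja = c' ja - 1 := by simp [hcdef]
      have hc''b : c'' jb = c' jb + 1 := by simp [hcdef, Ne.symm hab]
      have hjbm : jb ∈ Finset.univ.erase ja :=
        Finset.mem_erase.mpr ⟨Ne.symm hab, Finset.mem_univ _⟩
      set E := (Finset.univ.erase ja).erase jb with hEdef
      have hcc : ∀ j ∈ E, c'' j = c' j := by
        intro j hj
        rw [hEdef, Finset.mem_erase, Finset.mem_erase] at hj
        simp [hcdef, hj.1, hj.2.1]
      have hsplitN : ∀ F : Fin n → ℕ,
          ∑ j, F j = ((∑ j ∈ E, F j) + F jb) + F ja := by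
        intro F
        rw [hEdef, Finset.sum_erase_add _ _ hjbm, Finset.sum_erase_add _ _ (Finset.mem_univ ja)]
      have hsplitR : ∀ F : Fin n → ℝ,
          ∑ j, F j = ((∑ j ∈ E, F j) + F jb) + F ja := by
        intro F
        rw [hEdef, Finset.sum_erase_add _ _ hjbm, Finset.sum_erase_add _ _ (Finset.mem_univ ja)]
      -- sum of c'' is n
      have hE1 : ∑ j ∈ E, c'' j = ∑ j ∈ E, c' j := Finset.sum_congr rfl hcc
      have hs1 : ∑ j, c'' j = ((∑ j ∈ E, c'' j) + c'' jb) + c'' ja := hsplitN c''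
      have hs2 : ∑ j, c' j = ((∑ j ∈ E, c' j) + c' jb) + c' ja := hsplitN c'
      have hsum'' : ∑ j, c'' j = n := by
        rw [hs1, hE1, hc''a, hc''b]; omega
      -- distance decreases
      have hd1 : ∑ j, ((c'' j - c j) + (c j - c'' j))
          = ((∑ j ∈ E, ((c'' j - c j) + (c j - c'' j)))
            + ((c'' jb - c jb) + (c jb - c'' jb))) + ((c'' ja - c ja) + (c ja - c'' ja)) :=
        hsplitN _
      have hd2 : ∑ j, ((c' j - c j) + (c j - c' j))
          = ((∑ j ∈ E, ((c' j - c j) + (c j - c' j)))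
            + ((c' jb - c jb) + (c jb - c' jb))) + ((c' ja - c ja) + (c ja - c' ja)) :=
        hsplitN _
      have hdE : ∑ j ∈ E, ((c'' j - c j) + (c j - c'' j))
          = ∑ j ∈ E, ((c' j - c j) + (c j - c' j)) :=
        Finset.sum_congr rfl (fun j hj => by rw [hcc j hj])
      rw [hc''a, hc''b] at hd1
      have hdist : (∑ j, ((c'' j - c j) + (c j - c'' j))) + 2
          = ∑ j, ((c' j - c j) + (c j - c' j)) := by
        rw [hd1, hd2, hdE]; omega
      -- welfare change
      have hb1 : c' jb < n := lt_of_lt_of_le hltb (hbc jb)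
      have ha1 : c' ja - 1 < n := by have := hbc' ja; omega
      have hw1 : ∑ j, m j * Rr r (c'' j)
          = ((∑ j ∈ E, m j * Rr r (c'' j)) + m jb * Rr r (c'' jb)) + m ja * Rr r (c'' ja) :=
        hsplitR _
      have hw2 : ∑ j, m j * Rr r (c' j)
          = ((∑ j ∈ E, m j * Rr r (c' j)) + m jb * Rr r (c' jb)) + m ja * Rr r (c' ja) :=
        hsplitR _
      have hwE : ∑ j ∈ E, m j * Rr r (c'' j) = ∑ j ∈ E, m j * Rr r (c' j) :=
        Finset.sum_congr rfl (fun j hj => by rw [hcc j hj])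
      rw [hc''a, hc''b] at hw1
      have hRb : Rr r (c' jb + 1) = Rr r (c' jb) + r ⟨c' jb, hb1⟩ := Rr_succ r _ hb1
      have hRa : Rr r (c' ja) = Rr r (c' ja - 1) + r ⟨c' ja - 1, ha1⟩ := by
        have hsucc := Rr_succ r (c' ja - 1) ha1
        have he1 : c' ja - 1 + 1 = c' ja := by omega
        rw [he1] at hsucc
        exact hsucc
      have hcjan : c ja < n := lt_of_lt_of_le hlta (hbc' ja)
      have hcjbn : c jb - 1 < n := by have := hbc jb; omega
      have hstep : m ja * r ⟨c' ja - 1, ha1⟩ ≤ m jb * r ⟨c' jb, hb1⟩ := by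
        have e1 : m ja * r ⟨c' ja - 1, ha1⟩ ≤ m ja * r ⟨c ja, hcjan⟩ :=
          mul_le_mul_of_nonneg_left (hmono _ _ (by simp [Fin.le_def]; omega)) (hm ja)
        have e2 : m ja * r ⟨c ja, hcjan⟩ ≤ m jb * r ⟨c jb - 1, hcjbn⟩ :=
          key jb ja (by omega) hab hcjan hcjbn
        have e3 : m jb * r ⟨c jb - 1, hcjbn⟩ ≤ m jb * r ⟨c' jb, hb1⟩ :=
          mul_le_mul_of_nonneg_left (hmono _ _ (by simp [Fin.le_def]; omega)) (hm jb)
        linarith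
      have hle : ∑ j, m j * Rr r (c' j) ≤ ∑ j, m j * Rr r (c'' j) := by
        rw [hw1, hw2, hwE, hRb, hRa]
        nlinarith [hm ja, hm jb, hstep]
      exact le_trans hle (ih c'' hsum'' (by omega))

end MainTvN

/-- In the TvN game with attention weights
`r₁ > r₂ ≥ ⋯ ≥ r_K ≥ 0 = r_{K+1} = ⋯ = rₙ` played under the BRCM mechanism
`M[r₁,…,rₙ]`, every pure Nash equilibrium attains the optimal social welfare. -/
theorem stmt13 {n : ℕ} (hn : 2 ≤ n) (K : ℕ) (hK1 : 1 ≤ K) (hKn : K ≤ n)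
    (r : Fin n → ℝ)
    (hmono : ∀ k k' : Fin n, k ≤ k' → r k' ≤ r k)
    (hnonneg : ∀ k, 0 ≤ r k)
    (hzero : ∀ k : Fin n, K ≤ (k : ℕ) → r k = 0)
    (h12 : r ⟨1, by omega⟩ < r ⟨0, by omega⟩)
    (sstar : Fin n → Fin n)
    (hPNE : ∀ (i : Fin n) (s'i : Fin n),
        tvnBRMUtility r (Function.update sstar i s'i) i ≤ tvnBRMUtility r sstar i) :
    ∀ s : Fin n → Fin n, tvnWelfare r s ≤ tvnWelfare r sstar := by
  classical
  have key : ∀ (j₀ j' : Fin n), 0 < cnt sstar j₀ → j' ≠ j₀ →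
      ∀ (h1 : cnt sstar j' < n) (h2 : cnt sstar j₀ - 1 < n),
      mF n j' * r ⟨cnt sstar j', h1⟩ ≤ mF n j₀ * r ⟨cnt sstar j₀ - 1, h2⟩ := by
    intro j₀ j' h0 hne h1 h2
    obtain ⟨i, hi⟩ := Finset.card_pos.mp h0
    rw [Finset.mem_filter] at hi
    have hji : sstar i = j₀ := hi.2
    subst hji
    have hni : sstar i ≠ j' := fun he => hne he.symm
    have hPNEi := hPNE i j'
    have hupd_i : Function.update sstar i j' i = j' := Function.update_self i j' sstar
    have hcnt' : cnt (Function.update sstar i j') j' = cnt sstar j' + 1 :=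
      cnt_update sstar i j' hni
    have hfu' : cnt (Function.update sstar i j') (Function.update sstar i j' i) - 1 < n := by
      rw [hupd_i, hcnt']; omega
    rw [utility_formula r sstar i h2, utility_formula r (Function.update sstar i j') i hfu']
      at hPNEi
    simp only [hupd_i, hcnt', Nat.add_sub_cancel] at hPNEi
    exact hPNEi
  intro s
  have hwe : ∀ s0 : Fin n → Fin n, tvnWelfare r s0 = ∑ j, mF n j * Rr r (cnt s0 j) :=
    fun s0 => rfl
  rw [hwe s, hwe sstar]
  exact main_arith r (mF n) mF_nonneg hmono (cnt sstar) (sum_cnt sstar) key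
    _ (cnt s) (sum_cnt s) le_rfl
end
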